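/- Let n be a positive integer and let a ≤ b be real numbers. Then ∫_a^b log|1 − e^{inθ}| dθ = (D(na) − D(nb))/n. -/

import Mathlib

/-- `D θ` is the Bloch–Wigner dilogarithm of `e^{iθ}`, given by the series
`Σ_{j=1}^∞ sin(jθ)/j²`. -/
noncomputable def blochWignerD (θ : ℝ) : ℝ :=
  ∑' j : ℕ, Real.sin ((j + 1) * θ) / ((j : ℝ) + 1) ^ 2

/-!
For `|r| < 1`, `log ‖1 - r e^{it}‖ = -Re Σ rⁿ e^{int}/n` is the derivative of `-Σ rⁿ sin(nt)/n²`, so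
its integral over `[0, x]` is `-Σ rⁿ sin(nx)/n²`. Let `r → 1⁻`. On the right, Abel's limit theorem
gives `-D(x)`. On the left, dominated convergence applies: `‖1 - e^{it}‖ ≤ 2 ‖1 - r e^{it}‖ ≤ 4`
bounds the integrand by `|log ‖1 - e^{it}‖| + log 2`, which is integrable because `t ↦ 1 - e^{it}`
is real analytic. The substitution `t = nθ` finishes the proof.
-/

open Filter Topology MeasureTheory

section UnitSphere

variable {A : Type*} [NormedRing A] [NormOneClass A] [NormedAlgebra ℝ A]

theorem norm_one_sub_le_two_mul_norm_one_sub_smul {w : A} (hw : ‖w‖ = 1) {r : ℝ} (hr0 : 0 ≤ r)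
    (hr1 : r ≤ 1) : ‖1 - w‖ ≤ 2 * ‖1 - r • w‖ := by
  have hrw : ‖r • w‖ = r := by rw [norm_smul, hw, Real.norm_of_nonneg hr0, mul_one]
  have hrw' : ‖(1 - r) • w‖ = 1 - r := by
    rw [norm_smul, hw, Real.norm_of_nonneg (sub_nonneg.2 hr1), mul_one]
  have h1 : 1 - r ≤ ‖1 - r • w‖ := by simpa [hrw] using norm_sub_norm_le (1 : A) (r • w)
  calc ‖1 - w‖ = ‖(1 - r • w) - (1 - r) • w‖ := by rw [sub_smul, one_smul]; abel_nf
    _ ≤ ‖1 - r • w‖ + (1 - r) := (norm_sub_le _ _).trans_eq (by rw [hrw'])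
    _ ≤ 2 * ‖1 - r • w‖ := by linarith

theorem abs_log_norm_one_sub_smul_le {w : A} (hw : ‖w‖ = 1) (hw1 : w ≠ 1) {r : ℝ} (hr0 : 0 ≤ r)
    (hr1 : r ≤ 1) : |Real.log ‖1 - r • w‖| ≤ |Real.log ‖1 - w‖| + Real.log 2 := by
  have hpos : 0 < ‖1 - w‖ := norm_pos_iff.2 (sub_ne_zero.2 hw1.symm)
  have hlow := norm_one_sub_le_two_mul_norm_one_sub_smul hw hr0 hr1
  have hup : ‖1 - r • w‖ ≤ 2 := by
    calc ‖1 - r • w‖ ≤ ‖(1 : A)‖ + ‖r • w‖ := norm_sub_le _ _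
      _ ≤ 2 := by rw [norm_one, norm_smul, hw, Real.norm_of_nonneg hr0]; linarith
  have hlog_low : Real.log ‖1 - w‖ - Real.log 2 ≤ Real.log ‖1 - r • w‖ := by
    rw [← Real.log_div hpos.ne' two_ne_zero]
    exact Real.log_le_log (by positivity) (by linarith)
  have hlog_up : Real.log ‖1 - r • w‖ ≤ Real.log 2 := Real.log_le_log (by linarith) hup
  rw [abs_le]
  constructor <;> linarith [neg_abs_le (Real.log ‖1 - w‖), abs_nonneg (Real.log ‖1 - w‖)]

end UnitSphere

theorem intervalIntegrable_log_norm_one_sub_smul_exp (r a b : ℝ) :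
    IntervalIntegrable (fun t : ℝ => Real.log ‖1 - r • Complex.exp (t * Complex.I)‖) volume a b := by
  apply MeromorphicOn.intervalIntegrable_log_norm
  apply AnalyticOnNhd.meromorphicOn
  intro t _
  have hlin : AnalyticAt ℝ (fun x : ℝ => (x : ℂ) * Complex.I) t :=
    (Complex.ofRealCLM.analyticAt t).mul analyticAt_const
  have hexp : AnalyticAt ℝ (fun x : ℝ => Complex.exp (x * Complex.I)) t :=
    (analyticAt_cexp.restrictScalars (𝕜 := ℝ)).comp hlin
  exact analyticAt_const.sub (hexp.const_smul (c := r))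

theorem intervalIntegrable_log_norm_one_sub_exp (a b : ℝ) :
    IntervalIntegrable (fun t : ℝ => Real.log ‖1 - Complex.exp (t * Complex.I)‖) volume a b := by
  simpa using intervalIntegrable_log_norm_one_sub_smul_exp 1 a b

theorem ae_exp_ofReal_mul_I_ne_one : ∀ᵐ t : ℝ, Complex.exp (t * Complex.I) ≠ 1 := by
  have hsub : {t : ℝ | ¬Complex.exp (t * Complex.I) ≠ 1} ⊆
      Set.range (fun n : ℤ => n * (2 * Real.pi)) := by
    intro t ht
    obtain ⟨n, hn⟩ := Complex.exp_eq_one_iff.1 (not_not.1 ht)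
    exact ⟨n, by simpa using (congrArg Complex.im hn).symm⟩
  exact ae_iff.2 (measure_mono_null hsub ((Set.countable_range _).measure_zero _))

-- The series below start at `n = 0`, where their terms vanish because `x / 0 = 0`.
theorem hasSum_neg_log_norm_one_sub_smul_exp {r : ℝ} (hr : |r| < 1) (t : ℝ) :
    HasSum (fun n : ℕ => r ^ n / n * Real.cos (n * t))
      (-Real.log ‖1 - r • Complex.exp (t * Complex.I)‖) := by
  have hz : ‖r • Complex.exp (t * Complex.I)‖ < 1 := by
    simpa [norm_smul, Complex.norm_exp_ofReal_mul_I] using hr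
  have hterm : ∀ n : ℕ, (r • Complex.exp (t * Complex.I)) ^ n / n =
      ((r ^ n / n : ℝ) : ℂ) * Complex.exp ((n * t : ℝ) * Complex.I) := by
    intro n
    rw [smul_pow, ← Complex.exp_nat_mul, Complex.real_smul]
    push_cast
    ring_nf
  simpa only [hterm, Complex.re_ofReal_mul, Complex.exp_ofReal_mul_I_re, Complex.neg_re,
    Complex.log_re] using Complex.hasSum_re (Complex.hasSum_taylorSeries_neg_log hz)

theorem hasDerivAt_tsum_sin_mul_div_sq_mul_pow {r : ℝ} (hr : |r| < 1) (x : ℝ) :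
    HasDerivAt (fun y => ∑' n : ℕ, Real.sin (n * y) / n ^ 2 * r ^ n)
      (∑' n : ℕ, r ^ n / n * Real.cos (n * x)) x := by
  have hterm : ∀ (n : ℕ) (y : ℝ), HasDerivAt (fun y => Real.sin (n * y) / n ^ 2 * r ^ n)
      (r ^ n / n * Real.cos (n * y)) y := by
    intro n y
    have h := (((hasDerivAt_id y).const_mul (n : ℝ)).sin.div_const ((n : ℝ) ^ 2)).mul_const (r ^ n)
    simp only [id, mul_one] at h
    refine h.congr_deriv ?_
    rcases eq_or_ne (n : ℝ) 0 with hn | hn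
    · simp [hn]
    · field_simp
  have hbound : ∀ (n : ℕ) (y : ℝ), ‖r ^ n / n * Real.cos (n * y)‖ ≤ |r| ^ n := by
    intro n y
    rcases Nat.eq_zero_or_pos n with rfl | hn
    · simp
    rw [norm_mul, norm_div, norm_pow, Real.norm_eq_abs, Real.norm_natCast]
    have hn1 : (1 : ℝ) ≤ n := by exact_mod_cast hn
    calc |r| ^ n / n * ‖Real.cos (n * y)‖ ≤ |r| ^ n / 1 * 1 := by
          gcongr
          simpa using Real.abs_cos_le_one _
      _ = |r| ^ n := by ring
  exact hasDerivAt_tsum (summable_geometric_of_lt_one (abs_nonneg r) hr) hterm hbound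
    (y₀ := 0) (by simp) x

theorem integral_log_norm_one_sub_smul_exp {r : ℝ} (hr : |r| < 1) (x : ℝ) :
    ∫ t in (0 : ℝ)..x, Real.log ‖1 - r • Complex.exp (t * Complex.I)‖ =
      -∑' n : ℕ, Real.sin (n * x) / n ^ 2 * r ^ n := by
  have hderiv : ∀ y : ℝ, HasDerivAt (fun y => -∑' n : ℕ, Real.sin (n * y) / n ^ 2 * r ^ n)
      (Real.log ‖1 - r • Complex.exp (y * Complex.I)‖) y := fun y =>
    (hasDerivAt_tsum_sin_mul_div_sq_mul_pow hr y).fun_neg.congr_deriv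
      (by rw [(hasSum_neg_log_norm_one_sub_smul_exp hr y).tsum_eq, neg_neg])
  rw [intervalIntegral.integral_eq_sub_of_hasDerivAt (fun y _ => hderiv y)
    (intervalIntegrable_log_norm_one_sub_smul_exp r 0 x)]
  simp

theorem summable_sin_mul_div_sq (x : ℝ) : Summable fun n : ℕ => Real.sin (n * x) / n ^ 2 := by
  refine Summable.of_norm_bounded (Real.summable_one_div_nat_pow.2 one_lt_two) fun n => ?_
  rw [norm_div, norm_pow, Real.norm_natCast]
  gcongr
  simpa using Real.abs_sin_le_one _

theorem blochWignerD_eq_tsum (x : ℝ) : blochWignerD x = ∑' n : ℕ, Real.sin (n * x) / n ^ 2 := by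
  rw [(summable_sin_mul_div_sq x).tsum_eq_zero_add, blochWignerD]
  push_cast
  simp

theorem tendsto_tsum_sin_mul_div_sq_mul_pow (x : ℝ) :
    Tendsto (fun r => ∑' n : ℕ, Real.sin (n * x) / n ^ 2 * r ^ n) (𝓝[<] 1)
      (𝓝 (blochWignerD x)) := by
  rw [blochWignerD_eq_tsum]
  exact Real.tendsto_tsum_powerSeries_nhdsWithin_lt
    (summable_sin_mul_div_sq x).hasSum.tendsto_sum_nat

theorem tendsto_integral_log_norm_one_sub_smul_exp (x : ℝ) :
    Tendsto (fun r : ℝ => ∫ t in (0 : ℝ)..x, Real.log ‖1 - r • Complex.exp (t * Complex.I)‖)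
      (𝓝[<] 1) (𝓝 (∫ t in (0 : ℝ)..x, Real.log ‖1 - Complex.exp (t * Complex.I)‖)) := by
  refine intervalIntegral.tendsto_integral_filter_of_dominated_convergence
    (fun t => |Real.log ‖1 - Complex.exp (t * Complex.I)‖| + Real.log 2) ?_ ?_ ?_ ?_
  · exact Eventually.of_forall fun r =>
      (intervalIntegrable_log_norm_one_sub_smul_exp r 0 x).def'.aestronglyMeasurable
  · filter_upwards [Ioo_mem_nhdsLT zero_lt_one] with r hr
    filter_upwards [ae_exp_ofReal_mul_I_ne_one] with t ht _
    exact abs_log_norm_one_sub_smul_le (Complex.norm_exp_ofReal_mul_I t) ht hr.1.le hr.2.le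
  · exact (intervalIntegrable_log_norm_one_sub_exp 0 x).abs.add intervalIntegrable_const
  · filter_upwards [ae_exp_ofReal_mul_I_ne_one] with t ht _
    have hcont : ContinuousAt (fun r : ℝ => Real.log ‖1 - r • Complex.exp (t * Complex.I)‖) 1 :=
      (continuous_const.sub (continuous_id.smul continuous_const)).norm.continuousAt.log
        (by simpa [sub_eq_zero] using ht.symm)
    simpa using hcont.tendsto.mono_left nhdsWithin_le_nhds

theorem integral_log_norm_one_sub_exp_zero (x : ℝ) :
    ∫ t in (0 : ℝ)..x, Real.log ‖1 - Complex.exp (t * Complex.I)‖ = -blochWignerD x := by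
  refine tendsto_nhds_unique (tendsto_integral_log_norm_one_sub_smul_exp x)
    ((tendsto_tsum_sin_mul_div_sq_mul_pow x).neg.congr' ?_)
  filter_upwards [Ioo_mem_nhdsLT (neg_lt_self one_pos)] with r hr
  exact (integral_log_norm_one_sub_smul_exp (abs_lt.2 hr) x).symm

theorem integral_log_abs_one_sub_exp_general (n : ℕ) (hn : 0 < n) (a b : ℝ) :
    ∫ θ in a..b, Real.log ‖1 - Complex.exp ((n : ℝ) * θ * Complex.I)‖ =
      (blochWignerD (n * a) - blochWignerD (n * b)) / n := by
  have hn' : (n : ℝ) ≠ 0 := by positivity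
  have hsplit := intervalIntegral.integral_interval_sub_left
    (intervalIntegrable_log_norm_one_sub_exp 0 (n * b))
    (intervalIntegrable_log_norm_one_sub_exp 0 (n * a))
  rw [integral_log_norm_one_sub_exp_zero, integral_log_norm_one_sub_exp_zero] at hsplit
  rw [eq_div_iff hn', mul_comm, ← smul_eq_mul]
  simp_rw [← Complex.ofReal_mul]
  rw [intervalIntegral.smul_integral_comp_mul_left
    (fun t : ℝ => Real.log ‖1 - Complex.exp (t * Complex.I)‖), ← hsplit]
  ring

/-- For a positive integer `n` and reals `a ≤ b`,
`∫_a^b log|1 − e^{inθ}| dθ = (D(na) − D(nb))/n`. -/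
theorem integral_log_abs_one_sub_exp (n : ℕ) (hn : 0 < n) (a b : ℝ) (hab : a ≤ b) :
    ∫ θ in a..b, Real.log ‖1 - Complex.exp ((n : ℝ) * θ * Complex.I)‖ =
      (blochWignerD (n * a) - blochWignerD (n * b)) / n :=
  integral_log_abs_one_sub_exp_general n hn a b
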